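/- Let B : ℕ → ℕ be a finitely supported nonincreasing sequence with total sum q (q = Σ_n B(n), the number of blocks of the Young diagram B). Suppose C assigns to each n ≥ 1 a finitely supported nonincreasing sequence such that C(1) is the zero sequence, C(2) = B, and for every n ≥ 3, C(n) is the lexicographic maximum, over all m with 2 ≤ m ≤ n−1 and all lists of positive integers j_1, …, j_m with j_1 + ⋯ + j_m = n, of merge(C(m), C(j_1) ⊕ ⋯ ⊕ C(j_m)). Then for every n ≥ 1 the total sum of the entries of C(n) equals q·(n − 1). -/

import Mathlib

/-- A sequence is finitely supported if it is eventually zero. -/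
def FinSupported (A : ℕ → ℕ) : Prop :=
  ∃ N, ∀ n, N ≤ n → A n = 0

/-- The lexicographic order on sequences: `A ≤ B` iff `A = B` or at the smallest index
where they differ, the entry of `A` is smaller. -/
def LexLe (A B : ℕ → ℕ) : Prop :=
  A = B ∨ ∃ n, (∀ m, m < n → A m = B m) ∧ A n < B n

/-- The length of a finitely supported sequence: the least `N` such that `X n = 0`
for all `n ≥ N`. -/
noncomputable def len (X : ℕ → ℕ) : ℕ :=
  sInf {N | ∀ n, N ≤ n → X n = 0}

/-- The multiset of nonzero values (with multiplicity) of a finitely supported sequence. -/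
noncomputable def vals (A : ℕ → ℕ) : Multiset ℕ :=
  Multiset.filter (fun x => x ≠ 0) (((List.range (len A)).map A : List ℕ) : Multiset ℕ)

/-- Merge of two finitely supported sequences: the nonincreasing finitely supported
sequence whose multiset of nonzero values is the multiset sum of those of `A` and `B`
(concatenate and sort into nonincreasing order). -/
noncomputable def merge (A B : ℕ → ℕ) : ℕ → ℕ :=
  fun n => (((vals A + vals B).sort (· ≤ ·)).reverse).getD n 0

/-!
The number of blocks is additive under `merge` and under pointwise sums, so for the
composition `n = j₁ + ⋯ + jₘ` realising `C n` strong induction gives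
`q (m - 1) + ∑ q (jᵢ - 1) = q (m - 1) + q (n - m) = q (n - 1)`.
-/

theorem List.finsum_getD_eq_sum {M : Type*} [AddCommMonoid M] (l : List M) :
    ∑ᶠ n, l.getD n 0 = l.sum := by
  rw [finsum_eq_sum_of_support_subset (s := Finset.range l.length), Finset.sum_range,
    ← Fin.sum_univ_getElem]
  · simp only [List.getD_eq_getElem _ _ (Fin.is_lt _)]
  · intro n hn
    by_contra h
    exact hn (List.getD_eq_default _ _ (by simpa using h))

theorem Multiset.sum_filter_ne_zero {M : Type*} [AddCommMonoid M] [DecidableEq M]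
    (s : Multiset M) : (s.filter (· ≠ 0)).sum = s.sum := by
  induction s using Multiset.induction_on with
  | empty => rfl
  | cons a s ih => by_cases ha : a = 0 <;> simp [ha, ih]

theorem List.sum_map_pred_add_length {L : List ℕ} (hL : ∀ x ∈ L, 0 < x) :
    (L.map (· - 1)).sum + L.length = L.sum := by
  induction L with
  | nil => rfl
  | cons a L ih =>
    have ha := hL a List.mem_cons_self
    have := ih fun x hx => hL x (List.mem_cons_of_mem a hx)
    simp only [List.map_cons, List.sum_cons, List.length_cons]
    omega

namespace FinSupported

theorem eq_zero_of_len_le {A : ℕ → ℕ} (hA : FinSupported A) {n : ℕ} (hn : len A ≤ n) :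
    A n = 0 :=
  Nat.sInf_mem hA n hn

theorem hasFiniteSupport {A : ℕ → ℕ} (hA : FinSupported A) : A.HasFiniteSupport := by
  obtain ⟨N, hN⟩ := hA
  refine (Set.finite_Iio N).subset fun n hn => ?_
  by_contra h
  exact hn (hN n (not_lt.mp h))

theorem add {A B : ℕ → ℕ} (hA : FinSupported A) (hB : FinSupported B) :
    FinSupported (A + B) := by
  obtain ⟨N, hN⟩ := hA
  obtain ⟨M, hM⟩ := hB
  exact ⟨max N M, fun n hn => by
    simp [hN n (le_of_max_le_left hn), hM n (le_of_max_le_right hn)]⟩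

theorem list_sum {L : List (ℕ → ℕ)} (hL : ∀ A ∈ L, FinSupported A) : FinSupported L.sum :=
  List.sum_induction _ (fun _ _ => add) ⟨0, fun _ _ => rfl⟩ hL

theorem finsum_eq_sum_range_len {A : ℕ → ℕ} (hA : FinSupported A) :
    ∑ᶠ k, A k = ∑ k ∈ Finset.range (len A), A k := by
  refine finsum_eq_sum_of_support_subset A fun n hn => ?_
  by_contra h
  exact hn (hA.eq_zero_of_len_le (by simpa using h))

theorem sum_vals {A : ℕ → ℕ} (hA : FinSupported A) : (vals A).sum = ∑ᶠ k, A k := by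
  rw [vals, Multiset.sum_filter_ne_zero, hA.finsum_eq_sum_range_len, Finset.sum_eq_multiset_sum,
    Finset.range_val, Multiset.range, Multiset.map_coe, Multiset.sum_coe]

end FinSupported

theorem finsum_merge {A B : ℕ → ℕ} (hA : FinSupported A) (hB : FinSupported B) :
    ∑ᶠ n, merge A B n = ∑ᶠ k, A k + ∑ᶠ k, B k := by
  unfold merge
  rw [List.finsum_getD_eq_sum, List.sum_reverse, ← Multiset.sum_coe, Multiset.sort_eq,
    Multiset.sum_add, hA.sum_vals, hB.sum_vals]

theorem finsum_list_sum {α M : Type*} [AddCommMonoid M] {L : List (α → M)} (hL : ∀ A ∈ L, A.HasFiniteSupport) :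
    ∑ᶠ n, L.sum n = (L.map fun A => ∑ᶠ n, A n).sum := by
  induction L with
  | nil => simp
  | cons A L ih =>
    have hLsum : L.sum.HasFiniteSupport :=
      List.sum_induction _ (fun _ _ => Function.HasFiniteSupport.add)
        Function.hasFiniteSupport_zero fun B hB => hL B (List.mem_cons_of_mem A hB)
    simp only [List.sum_cons, List.map_cons, Pi.add_apply]
    rw [finsum_add_distrib (hL A List.mem_cons_self) hLsum,
      ih fun B hB => hL B (List.mem_cons_of_mem A hB)]

theorem finsum_merge_list_sum {A : ℕ → ℕ} {L : List (ℕ → ℕ)} (hA : FinSupported A)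
    (hL : ∀ B ∈ L, FinSupported B) :
    ∑ᶠ n, merge A L.sum n = ∑ᶠ k, A k + (L.map fun B => ∑ᶠ k, B k).sum := by
  rw [finsum_merge hA (FinSupported.list_sum hL),
    finsum_list_sum fun B hB => (hL B hB).hasFiniteSupport]

theorem generated_operad_block_count_general (B : ℕ → ℕ)
    (q : ℕ) (hq : ∑ᶠ k, B k = q)
    (C : ℕ → ℕ → ℕ)
    (hCfin : ∀ n, 1 ≤ n → FinSupported (C n))
    (hC1 : C 1 = fun _ => 0)
    (hC2 : C 2 = B)
    (hCrec : ∀ n, 3 ≤ n →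
      (∀ (m : ℕ) (L : List ℕ), 2 ≤ m → m ≤ n - 1 → L.length = m →
          (∀ x ∈ L, 0 < x) → L.sum = n →
          LexLe (merge (C m) (L.map C).sum) (C n)) ∧
      (∃ (m : ℕ) (L : List ℕ), 2 ≤ m ∧ m ≤ n - 1 ∧ L.length = m ∧
          (∀ x ∈ L, 0 < x) ∧ L.sum = n ∧
          merge (C m) (L.map C).sum = C n)) :
    ∀ n, 1 ≤ n → ∑ᶠ k, C n k = q * (n - 1) := by
  intro n hn
  induction n using Nat.strong_induction_on with | _ n ih =>
  obtain h12 | h3 := Nat.lt_or_ge n 3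
  · interval_cases n
    · simp [hC1]
    · simp [hC2, hq]
  obtain ⟨m, L, hm2, hmn, rfl, hLpos, hLsum, hmerge⟩ := (hCrec n h3).2
  have hpred := List.sum_map_pred_add_length hLpos
  have hL : ∀ j ∈ L, 1 ≤ j ∧ j < n := fun j hj =>
    ⟨hLpos j hj, by have := List.le_sum_of_mem (List.mem_map_of_mem (f := (· - 1)) hj); omega⟩
  have hblocks : (L.map C).map (fun B => ∑ᶠ k, B k) = L.map fun j => q * (j - 1) := by
    rw [List.map_map]
    exact List.map_congr_left fun j hj => ih j (hL j hj).2 (hL j hj).1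
  rw [← hmerge, finsum_merge_list_sum (hCfin _ (by omega))
      (by simpa using fun j hj => hCfin j (hL j hj).1),
    ih _ (by omega) (by omega), hblocks, List.sum_map_mul_left, ← mul_add]
  congr 1
  omega

/-- if `B` is a Young diagram with `q` blocks and `C` is the minimal 2-fold
operad of Young diagrams generated by `B` (each `C n`, `n ≥ 3`, being the lexicographic
maximum of all merges of products of prior terms over compositions of `n`), then `C n`
has exactly `q * (n - 1)` blocks for every `n ≥ 1`. -/
theorem generated_operad_block_count (B : ℕ → ℕ)
    (hBfin : FinSupported B) (hBanti : Antitone B)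
    (q : ℕ) (hq : ∑ᶠ k, B k = q)
    (C : ℕ → ℕ → ℕ)
    (hCfin : ∀ n, 1 ≤ n → FinSupported (C n))
    (hCanti : ∀ n, 1 ≤ n → Antitone (C n))
    (hC1 : C 1 = fun _ => 0)
    (hC2 : C 2 = B)
    (hCrec : ∀ n, 3 ≤ n →
      (∀ (m : ℕ) (L : List ℕ), 2 ≤ m → m ≤ n - 1 → L.length = m →
          (∀ x ∈ L, 0 < x) → L.sum = n →
          LexLe (merge (C m) (L.map C).sum) (C n)) ∧
      (∃ (m : ℕ) (L : List ℕ), 2 ≤ m ∧ m ≤ n - 1 ∧ L.length = m ∧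
          (∀ x ∈ L, 0 < x) ∧ L.sum = n ∧
          merge (C m) (L.map C).sum = C n)) :
    ∀ n, 1 ≤ n → ∑ᶠ k, C n k = q * (n - 1) :=
  generated_operad_block_count_general B q hq C hCfin hC1 hC2 hCrec
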